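/- (Limit description of the chase result.) Let σ_0, σ_1, … be a chasing sequence of σ over Σ, with associated valuations ρ_0 = id, ρ_{n+1} = g ∘ ρ_n when σ_{n+1} = g(σ_n) by the egd rule and ρ_{n+1} = ρ_n otherwise, and ρ(x) := lim_n ρ_n(x). Then the chase result satisfies chase∞(Σ, σ) = ⋃_{n=0}^{∞} ρ(σ_n); in particular Tⁱ = ⋃_{n=0}^{∞} ρ(pr_i(σ_n)) for the components Tⁱ := {u : ∃m ∀n ≥ m, u ∈ pr_i(σ_n)}. -/
import Mathlib


namespace EmbeddedDependencies

noncomputable section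
open Classical

/- Values and attributes coincide; we take them to be natural numbers
   (a countably infinite set, with its total well-founded order `<`). -/
abbrev Val := ℕ

/-- A tuple over an attribute set `R` is (canonically encoded as) a total function
    `Val → Val`; only its values on `R` matter. -/
abbrev Tuple := Val → Val

/-- A relation is a set of tuples. -/
abbrev Rel := Set Tuple

/-- Canonical restriction of a tuple to the attribute set `R` (default value `0` outside `R`). -/
def restrictT (R : Set Val) (t : Tuple) : Tuple := fun a => if a ∈ R then t a else 0

/-- Restriction `r|_R` of a relation `r` to the attribute set `R`. -/
def restrictR (R : Set Val) (r : Rel) : Rel := (restrictT R) '' r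

/-- `Val(T)`: the set of values occurring in the relation `T` over the attribute set `R`. -/
def valsOf (R : Set Val) (T : Rel) : Set Val := {v | ∃ t ∈ T, ∃ a ∈ R, t a = v}

/-- `f(T) ⊆ r|_R` for a valuation `f : Val → Val`. -/
def Embeds (R : Set Val) (f : Val → Val) (T r : Rel) : Prop :=
  ∀ t ∈ T, restrictT R (f ∘ t) ∈ restrictR R r

/-- Satisfaction of the egd `(T, x = y)` over `R` by the relation `r`:
    every valuation `f` with `f(T) ⊆ r|_R` satisfies `f x = f y`. -/
def egdSat (R : Set Val) (T : Rel) (x y : Val) (r : Rel) : Prop :=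
  ∀ f : Val → Val, Embeds R f T r → f x = f y

/-- Satisfaction of the tgd `(T, T')` over `R` by the relation `r`: every valuation `f`
    (on `Val(T)`) with `f(T) ⊆ r|_R` has an extension `g` to `Val(T')`, agreeing with `f`
    on `Val(T) ∩ Val(T')`, with `g(T') ⊆ r|_R`. -/
def tgdSat (R : Set Val) (T T' : Rel) (r : Rel) : Prop :=
  ∀ f : Val → Val, Embeds R f T r →
    ∃ g : Val → Val, (∀ v ∈ valsOf R T ∩ valsOf R T', g v = f v) ∧ Embeds R g T' r

/-- Satisfaction of the inclusion dependency `A_1 … A_n ⊆ B_1 … B_n` by the relation `r`. -/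
def indSat (A B : List Val) (r : Rel) : Prop :=
  ∀ s ∈ r, ∃ s' ∈ r, A.map s = B.map s'

/-- `A` is a sequence listing the attribute set `R`. -/
def ListsR (A : List Val) (R : Set Val) : Prop := A.Nodup ∧ ∀ a, a ∈ A ↔ a ∈ R

/-- Dependencies: egd's and tgd's (with their attribute set) and ind's. -/
inductive Dep : Type
  | egd (R : Set Val) (T : Rel) (x y : Val)
  | tgd (R : Set Val) (T T' : Rel)
  | ind (A B : List Val)

/-- Satisfaction of a dependency by a relation. -/
def Dep.sat (r : Rel) : Dep → Prop
  | .egd R T x y => egdSat R T x y r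
  | .tgd R T T' => tgdSat R T T' r
  | .ind A B => indSat A B r

/-- The attribute set `Att(σ)` of a dependency. -/
def Dep.att : Dep → Set Val
  | .egd R _ _ _ => R
  | .tgd R _ _ => R
  | .ind A B => {v | v ∈ A ∨ v ∈ B}

def Dep.isEgd : Dep → Prop
  | .egd _ _ _ _ => True
  | _ => False

def Dep.isTgd : Dep → Prop
  | .tgd _ _ _ => True
  | _ => False

/-- `d` is an egd or a tgd. -/
def Dep.isET (d : Dep) : Prop := d.isEgd ∨ d.isTgd

/-- Well-formed egd/tgd over the attribute set `R`: finite tableaux, canonically encoded,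
    and (for an egd) `x, y ∈ Val(T)`. -/
def Dep.wf (R : Set Val) : Dep → Prop
  | .egd R0 T x y => R0 = R ∧ T.Finite ∧ restrictR R T = T ∧
      x ∈ valsOf R T ∧ y ∈ valsOf R T
  | .tgd R0 T T' => R0 = R ∧ T.Finite ∧ T'.Finite ∧
      restrictR R T = T ∧ restrictR R T' = T'
  | .ind _ _ => False

/-- `Σ ⊨ σ`: every relation over a superset of `R` satisfying every member of `Σ`
    satisfies `σ`. -/
def Entails (R : Set Val) (Sg : Set Dep) (s : Dep) : Prop :=
  ∀ S : Set Val, R ⊆ S → ∀ r : Rel, restrictR S r = r →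
    (∀ d ∈ Sg, Dep.sat r d) → Dep.sat r s

/-- Apply a valuation `g` to every tuple of a relation over `R`. -/
def mapRel (R : Set Val) (g : Val → Val) (T : Rel) : Rel :=
  (fun t => restrictT R (g ∘ t)) '' T

/-- First component (tableau) of a dependency. -/
def pr1 : Dep → Rel
  | .egd _ T _ _ => T
  | .tgd _ T _ => T
  | .ind _ _ => ∅

/-- Second component of a tgd. -/
def pr2T : Dep → Rel
  | .tgd _ _ T' => T'
  | _ => ∅

/-- Left value of the equality of an egd. -/
def eqFst : Dep → Val
  | .egd _ _ x _ => x
  | _ => 0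

/-- Right value of the equality of an egd. -/
def eqSnd : Dep → Val
  | .egd _ _ _ y => y
  | _ => 0

/-- The values occurring in a dependency (over ambient attribute set `R`). -/
def depVals (R : Set Val) : Dep → Set Val
  | .egd _ T x y => valsOf R T ∪ {x, y}
  | .tgd _ T T' => valsOf R T ∪ valsOf R T'
  | .ind A B => {v | v ∈ A ∨ v ∈ B}

/-- `g(σ)`: apply a valuation to a dependency. -/
def applyVal (R : Set Val) (g : Val → Val) : Dep → Dep
  | .egd R0 T x y => .egd R0 (mapRel R g T) (g x) (g y)
  | .tgd R0 T T' => .tgd R0 (mapRel R g T) (mapRel R g T')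
  | .ind A B => .ind A B

/-- Replace the first component of a dependency. -/
def withPr1 (d : Dep) (T : Rel) : Dep :=
  match d with
  | .egd R0 _ x y => .egd R0 T x y
  | .tgd R0 _ T' => .tgd R0 T T'
  | .ind A B => .ind A B

/-- The valuation that is the identity everywhere except that it maps the greater of
    `p, q` to the smaller. -/
def mergeVal (p q : Val) : Val → Val := fun v => if v = max p q then min p q else v

/-- `f` witnesses that the egd `(S, x = y)` is applicable to the tableau `T`. -/
def EgdAppF (R : Set Val) (S : Rel) (x y : Val) (T : Rel) (f : Val → Val) : Prop :=
  Embeds R f S T ∧ f x ≠ f y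

/-- `f` witnesses that the tgd `(S, S')` is applicable to the tableau `T`:
    `f(S) ⊆ T` but no extension of `f` to `Val(S')` embeds `S'` into `T`. -/
def TgdAppF (R : Set Val) (S S' T : Rel) (f : Val → Val) : Prop :=
  Embeds R f S T ∧ ¬ ∃ g : Val → Val, (∀ v ∈ valsOf R S, g v = f v) ∧ Embeds R g S' T

/-- The dependency `d` is applicable to the tableau `T`. -/
def Applicable (R : Set Val) (d : Dep) (T : Rel) : Prop :=
  match d with
  | .egd _ S x y => ∃ f, EgdAppF R S x y T f
  | .tgd _ S S' => ∃ f, TgdAppF R S S' T f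
  | .ind _ _ => False

/-- One application of the egd rule of the chase, applying `d = (S, x = y)` via `f`,
    recording the merging valuation `g` and the pair `(f x, f y)`. -/
def EgdStepSpec (R : Set Val) (d σn σn1 : Dep) (g : Val → Val) (p : Val × Val) : Prop :=
  ∃ (S : Rel) (x y : Val) (f : Val → Val),
    d = Dep.egd R S x y ∧ EgdAppF R S x y (pr1 σn) f ∧
    p = (f x, f y) ∧ g = mergeVal (f x) (f y) ∧ σn1 = applyVal R g σn

/-- One application of the tgd rule of the chase at position `n` of the history `hist`:
    all (essentially distinct) applicable valuations are simultaneously given distinct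
    extensions whose new values are fresh and greater than every value occurring in
    `σ_0, …, σ_n`. -/
def TgdStepSpec (R : Set Val) (d : Dep) (hist : ℕ → Dep) (n : ℕ) : Prop :=
  ∃ S S' : Rel, d = Dep.tgd R S S' ∧
    (∃ f, TgdAppF R S S' (pr1 (hist n)) f) ∧
    ∃ ext : (Val → Val) → (Val → Val),
      (∀ f, TgdAppF R S S' (pr1 (hist n)) f → ∀ v ∈ valsOf R S, ext f v = f v) ∧
      (∀ f f', TgdAppF R S S' (pr1 (hist n)) f → TgdAppF R S S' (pr1 (hist n)) f' →
        (∀ v ∈ valsOf R S, f v = f' v) → ∀ v ∈ valsOf R S', ext f v = ext f' v) ∧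
      (∀ f, TgdAppF R S S' (pr1 (hist n)) f → ∀ v ∈ valsOf R S' \ valsOf R S,
        ∀ i ≤ n, ∀ w ∈ depVals R (hist i), w < ext f v) ∧
      (∀ f f', TgdAppF R S S' (pr1 (hist n)) f → TgdAppF R S S' (pr1 (hist n)) f' →
        ∀ v ∈ valsOf R S' \ valsOf R S, ∀ w ∈ valsOf R S' \ valsOf R S,
          ext f v = ext f' w → v = w ∧ ∀ z ∈ valsOf R S, f z = f' z) ∧
      hist (n + 1) = withPr1 (hist n)
        (pr1 (hist n) ∪ {t | ∃ f, TgdAppF R S S' (pr1 (hist n)) f ∧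
          ∃ s' ∈ S', t = restrictT R (ext f ∘ s')})

/-- A chasing sequence of `s0` over `Σ` (over the attribute set `R`): `seq` is the
    sequence `σ_0, σ_1, …`; `used n` records which dependency (if any) is applied at step
    `n` (`none` is allowed only when no dependency is applicable, the sequence then being
    constant from that point on); `gv n` is the merging valuation of an egd step (and `id`
    otherwise); `ep n` is the pair `(f x, f y)` of an egd step. An applied egd is applied
    repeatedly until no longer applicable, and no dependency applicable infinitely often
    is starved. -/
structure ChaseSeq (R : Set Val) (Sg : Set Dep) (s0 : Dep) where
  seq : ℕ → Dep
  used : ℕ → Option Dep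
  gv : ℕ → Val → Val
  ep : ℕ → Val × Val
  init : seq 0 = s0
  stepNone : ∀ n, used n = none →
    (∀ d ∈ Sg, ¬ Applicable R d (pr1 (seq n))) ∧ seq (n + 1) = seq n ∧ gv n = id
  stepSome : ∀ n d, used n = some d → d ∈ Sg ∧
    (EgdStepSpec R d (seq n) (seq (n + 1)) (gv n) (ep n) ∨
      (TgdStepSpec R d seq n ∧ gv n = id))
  egdRepeat : ∀ n d, used n = some d → Dep.isEgd d →
    Applicable R d (pr1 (seq (n + 1))) → used (n + 1) = some d
  fair : ∀ d ∈ Sg, (∀ m, ∃ n, m ≤ n ∧ Applicable R d (pr1 (seq n))) →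
    ∀ m, ∃ n, m ≤ n ∧ used n = some d

/-- The descending valuations `ρ_n` associated with a chasing sequence. -/
def ChaseSeq.rho {R : Set Val} {Sg : Set Dep} {s0 : Dep} (C : ChaseSeq R Sg s0) :
    ℕ → Val → Val
  | 0 => id
  | n + 1 => C.gv n ∘ C.rho n

/-- Eventual value of a sequence of values (defaulting to `0` if it does not stabilize). -/
noncomputable def evVal (g : ℕ → Val) : Val :=
  if h : ∃ m, ∀ n, m ≤ n → g n = g m then g h.choose else 0

/-- `ρ(x) = lim_n ρ_n(x)`. -/
noncomputable def ChaseSeq.rhoLim {R : Set Val} {Sg : Set Dep} {s0 : Dep}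
    (C : ChaseSeq R Sg s0) : Val → Val :=
  fun v => evVal fun n => C.rho n v

/-- `T¹ = {u : ∃m ∀n ≥ m, u ∈ pr_1(σ_n)}`. -/
def chaseLim1 {R : Set Val} {Sg : Set Dep} {s0 : Dep} (C : ChaseSeq R Sg s0) : Rel :=
  {t | ∃ m, ∀ n, m ≤ n → t ∈ pr1 (C.seq n)}

/-- `T² = {u : ∃m ∀n ≥ m, u ∈ pr_2(σ_n)}`. -/
def chaseLim2 {R : Set Val} {Sg : Set Dep} {s0 : Dep} (C : ChaseSeq R Sg s0) : Rel :=
  {t | ∃ m, ∀ n, m ≤ n → t ∈ pr2T (C.seq n)}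

/-- The chase result `chase∞(Σ, σ)`. -/
noncomputable def ChaseSeq.result {R : Set Val} {Sg : Set Dep} {s0 : Dep}
    (C : ChaseSeq R Sg s0) : Dep :=
  match s0 with
  | .egd R0 _ _ _ => .egd R0 (chaseLim1 C)
      (evVal fun n => eqFst (C.seq n)) (evVal fun n => eqSnd (C.seq n))
  | .tgd R0 _ _ => .tgd R0 (chaseLim1 C) (chaseLim2 C)
  | .ind A B => .ind A B

/-- A trivial dependency: an egd `(T, x = x)`, or a tgd `(T, T')` such that some
    valuation on `Val(T')` that is the identity on `Val(T) ∩ Val(T')` embeds `T'` into `T`. -/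
def TrivialDep (R : Set Val) : Dep → Prop
  | .egd _ _ x y => x = y
  | .tgd _ T T' => ∃ f : Val → Val, (∀ v ∈ valsOf R T ∩ valsOf R T', f v = v) ∧
      ∀ t' ∈ T', restrictT R (f ∘ t') ∈ restrictR R T
  | .ind _ _ => False


section Aux

variable {R : Set Val}

lemma restrictT_idem (t : Tuple) : restrictT R (restrictT R t) = restrictT R t := by
  funext a; by_cases h : a ∈ R <;> simp [restrictT, h]

lemma restrictT_comp (g : Val → Val) (t : Tuple) :
    restrictT R (g ∘ restrictT R t) = restrictT R (g ∘ t) := by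
  funext a; by_cases h : a ∈ R <;> simp [restrictT, h]

lemma mem_restrictT_self {T : Rel} (hT : restrictR R T = T) {t : Tuple} (ht : t ∈ T) :
    restrictT R t = t := by
  rw [← hT] at ht
  obtain ⟨u, _, rfl⟩ := ht
  exact restrictT_idem u

lemma mapRel_comp (g f : Val → Val) (T : Rel) :
    mapRel R g (mapRel R f T) = mapRel R (g ∘ f) T := by
  unfold mapRel
  rw [← Set.image_comp]
  apply Set.image_congr'
  intro t
  simp only [Function.comp]
  rw [restrictT_comp]
  rfl

lemma mergeVal_zero (p q : Val) : mergeVal p q 0 = 0 := by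
  unfold mergeVal
  split
  · rename_i h
    exact Nat.le_zero.mp ((min_le_max (a := p) (b := q)).trans_eq h.symm)
  · rfl

lemma mergeVal_le (p q v : Val) : mergeVal p q v ≤ v := by
  unfold mergeVal
  split
  · rename_i h
    exact h ▸ min_le_max
  · exact le_rfl

lemma mergeVal_fix {p q v : Val} (h : v ≠ max p q) : mergeVal p q v = v := by
  simp [mergeVal, h]

lemma mergeVal_ne_max {p q : Val} (h : p ≠ q) (w : Val) : mergeVal p q w ≠ max p q := by
  unfold mergeVal
  split
  · exact ne_of_lt (min_lt_max.2 h)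
  · assumption

lemma valsOf_union (T T' : Rel) : valsOf R (T ∪ T') = valsOf R T ∪ valsOf R T' := by
  ext v
  constructor
  · rintro ⟨t, ht | ht, a, ha, rfl⟩
    · exact Or.inl ⟨t, ht, a, ha, rfl⟩
    · exact Or.inr ⟨t, ht, a, ha, rfl⟩
  · rintro (⟨t, ht, a, ha, rfl⟩ | ⟨t, ht, a, ha, rfl⟩)
    · exact ⟨t, Or.inl ht, a, ha, rfl⟩
    · exact ⟨t, Or.inr ht, a, ha, rfl⟩

lemma valsOf_empty : valsOf R (∅ : Rel) = ∅ := by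
  ext v; simp [valsOf]

lemma valsOf_pr1_sub (d : Dep) : valsOf R (pr1 d) ⊆ depVals R d := by
  cases d with
  | egd R0 T x y => exact Set.subset_union_left
  | tgd R0 T T' => exact Set.subset_union_left
  | ind A B => simp [pr1, valsOf_empty]

lemma valsOf_pr2_sub (d : Dep) : valsOf R (pr2T d) ⊆ depVals R d := by
  cases d with
  | egd R0 T x y => simp [pr2T, valsOf_empty]
  | tgd R0 T T' => exact Set.subset_union_right
  | ind A B => simp [pr2T, valsOf_empty]

lemma embeds_val {f : Val → Val} {S T : Rel} (h : Embeds R f S T) {v : Val}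
    (hv : v ∈ valsOf R S) : f v ∈ valsOf R T := by
  obtain ⟨t, ht, a, ha, rfl⟩ := hv
  obtain ⟨u, hu, he⟩ := h t ht
  refine ⟨u, hu, a, ha, ?_⟩
  have := congrFun he a
  simpa [restrictT, ha] using this

lemma pr1_applyVal (g : Val → Val) (d : Dep) :
    pr1 (applyVal R g d) = mapRel R g (pr1 d) := by
  cases d <;> simp [pr1, applyVal, mapRel]

lemma pr2T_applyVal (g : Val → Val) (d : Dep) :
    pr2T (applyVal R g d) = mapRel R g (pr2T d) := by
  cases d <;> simp [pr2T, applyVal, mapRel]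

lemma eqFst_applyVal {g : Val → Val} (hg : g 0 = 0) (d : Dep) :
    eqFst (applyVal R g d) = g (eqFst d) := by
  cases d <;> simp [eqFst, applyVal, hg]

lemma eqSnd_applyVal {g : Val → Val} (hg : g 0 = 0) (d : Dep) :
    eqSnd (applyVal R g d) = g (eqSnd d) := by
  cases d <;> simp [eqSnd, applyVal, hg]

lemma depVals_applyVal {g : Val → Val} {d : Dep} (hd : ∀ A B, d ≠ .ind A B) :
    depVals R (applyVal R g d) ⊆ g '' (depVals R d) := by
  cases d with
  | egd R0 T x y =>
      rintro v (⟨t, ⟨u, hu, rfl⟩, a, ha, rfl⟩ | hv)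
      · exact ⟨u a, Or.inl ⟨u, hu, a, ha, rfl⟩, by simp [restrictT, ha]⟩
      · rcases hv with hv | hv
        · exact ⟨x, Or.inr (Or.inl rfl), hv.symm⟩
        · exact ⟨y, Or.inr (Or.inr rfl), hv.symm⟩
  | tgd R0 T T' =>
      rintro v (⟨t, ⟨u, hu, rfl⟩, a, ha, rfl⟩ | ⟨t, ⟨u, hu, rfl⟩, a, ha, rfl⟩)
      · exact ⟨u a, Or.inl ⟨u, hu, a, ha, rfl⟩, by simp [restrictT, ha]⟩
      · exact ⟨u a, Or.inr ⟨u, hu, a, ha, rfl⟩, by simp [restrictT, ha]⟩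
  | ind A B => exact absurd rfl (hd A B)

lemma pr1_withPr1 {d : Dep} (hd : ∀ A B, d ≠ .ind A B) (T : Rel) :
    pr1 (withPr1 d T) = T := by
  cases d with
  | egd R0 T0 x y => rfl
  | tgd R0 T0 T' => rfl
  | ind A B => exact absurd rfl (hd A B)

lemma pr2T_withPr1 (d : Dep) (T : Rel) : pr2T (withPr1 d T) = pr2T d := by
  cases d <;> rfl

lemma eqFst_withPr1 (d : Dep) (T : Rel) : eqFst (withPr1 d T) = eqFst d := by
  cases d <;> rfl

lemma eqSnd_withPr1 (d : Dep) (T : Rel) : eqSnd (withPr1 d T) = eqSnd d := by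
  cases d <;> rfl

lemma depVals_withPr1 (d : Dep) (T : Rel) :
    depVals R (withPr1 d T) ⊆ valsOf R T ∪ depVals R d := by
  cases d with
  | egd R0 T0 x y =>
      rintro v (hv | hv)
      · exact Or.inl hv
      · exact Or.inr (Or.inr hv)
  | tgd R0 T0 T' =>
      rintro v (hv | hv)
      · exact Or.inl hv
      · exact Or.inr (Or.inr hv)
  | ind A B => exact fun v hv => Or.inr hv

variable {Sg : Set Dep} {s : Dep}

/-- Transition valuations `F m n = gv (n-1) ∘ … ∘ gv m` (identity for `n ≤ m`). -/
def Fv (C : ChaseSeq R Sg s) (m : ℕ) : ℕ → Val → Val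
  | 0 => id
  | n+1 => if m ≤ n then C.gv n ∘ Fv C m n else id

lemma Fv_self (C : ChaseSeq R Sg s) (m : ℕ) : Fv C m m = id := by
  cases m with
  | zero => rfl
  | succ n => simp [Fv, Nat.not_succ_le_self]

lemma Fv_succ (C : ChaseSeq R Sg s) {m n : ℕ} (h : m ≤ n) :
    Fv C m (n+1) = C.gv n ∘ Fv C m n := by
  simp [Fv, h]

lemma Fv_of_le (C : ChaseSeq R Sg s) {m n : ℕ} (h : n ≤ m) : Fv C m n = id := by
  cases n with
  | zero => rfl
  | succ k => simp [Fv, Nat.not_le.2 (Nat.lt_of_succ_le h)]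

lemma rho_eq_Fv (C : ChaseSeq R Sg s) : ∀ n, C.rho n = Fv C 0 n := by
  intro n
  induction n with
  | zero => rfl
  | succ n ih => rw [ChaseSeq.rho, Fv_succ C (Nat.zero_le n), ih]

lemma Fv_trans (C : ChaseSeq R Sg s) {m q : ℕ} (hmq : m ≤ q) :
    ∀ n, q ≤ n → ∀ v, Fv C m n v = Fv C q n (Fv C m q v) := by
  intro n hn
  induction n, hn using Nat.le_induction with
  | base => intro v; rw [Fv_self]; rfl
  | succ n hqn ih =>
      intro v
      rw [Fv_succ C (hmq.trans hqn), Fv_succ C hqn, Function.comp_apply,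
        Function.comp_apply, ih]

lemma stepCases (C : ChaseSeq R Sg s) (hwf : ∀ d ∈ Sg, Dep.wf R d) (n : ℕ) :
    (∃ p q : Val, p ∈ valsOf R (pr1 (C.seq n)) ∧ q ∈ valsOf R (pr1 (C.seq n)) ∧ p ≠ q ∧
      C.gv n = mergeVal p q ∧ C.seq (n+1) = applyVal R (C.gv n) (C.seq n)) ∨
    (C.gv n = id ∧ C.seq (n+1) = C.seq n) ∨
    (C.gv n = id ∧ ∃ N : Rel, (∀ t ∈ N, restrictT R t = t) ∧
      (∀ t ∈ N, ∀ a ∈ R, t a ∈ valsOf R (pr1 (C.seq n)) ∨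
        ∀ i ≤ n, ∀ w ∈ depVals R (C.seq i), w < t a) ∧
      C.seq (n+1) = withPr1 (C.seq n) (pr1 (C.seq n) ∪ N)) := by
  cases h : C.used n with
  | none =>
      obtain ⟨_, h2, h3⟩ := C.stepNone n h
      exact Or.inr (Or.inl ⟨h3, h2⟩)
  | some d =>
      obtain ⟨hd, hspec⟩ := C.stepSome n d h
      rcases hspec with ⟨S, x, y, f, hdeq, ⟨hemb, hne⟩, hp, hg, hseq⟩ |
        ⟨⟨S, S', hdeq, happ, ext, hext1, hext2, hext3, hext4, hseq⟩, hgid⟩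
      · left
        have hw := hwf d hd
        rw [hdeq] at hw
        obtain ⟨-, -, -, hx, hy⟩ := hw
        refine ⟨f x, f y, embeds_val hemb hx, embeds_val hemb hy, hne, by rw [hg], hseq⟩
      · right; right
        refine ⟨hgid, {t | ∃ f, TgdAppF R S S' (pr1 (C.seq n)) f ∧
          ∃ s' ∈ S', t = restrictT R (ext f ∘ s')}, ?_, ?_, hseq⟩
        · rintro t ⟨f, hf, s', hs', rfl⟩
          exact restrictT_idem _
        · rintro t ⟨f, hf, s', hs', rfl⟩ a ha
          have hta : restrictT R (ext f ∘ s') a = ext f (s' a) := by simp [restrictT, ha]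
          rw [hta]
          by_cases hmem : s' a ∈ valsOf R S
          · left
            rw [hext1 f hf _ hmem]
            exact embeds_val hf.1 hmem
          · right
            exact hext3 f hf (s' a) ⟨⟨s', hs', a, ha, rfl⟩, hmem⟩

lemma seq_notInd (C : ChaseSeq R Sg s) (hwf : ∀ d ∈ Sg, Dep.wf R d)
    (hni : ∀ A B, s ≠ Dep.ind A B) : ∀ n A B, C.seq n ≠ Dep.ind A B := by
  intro n
  induction n with
  | zero => rw [C.init]; exact hni
  | succ n ih =>
      rcases stepCases C hwf n with ⟨p, q, -, -, -, -, hseq⟩ | ⟨-, hseq⟩ | ⟨-, N, -, -, hseq⟩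
      · rw [hseq]
        cases hsn : C.seq n with
        | egd R0 T x y => simp [applyVal]
        | tgd R0 T T' => simp [applyVal]
        | ind A B => exact absurd hsn (by intro h; exact ih A B h)
      · rw [hseq]; exact ih
      · rw [hseq]
        cases hsn : C.seq n with
        | egd R0 T x y => simp [withPr1]
        | tgd R0 T T' => simp [withPr1]
        | ind A B => exact absurd hsn (by intro h; exact ih A B h)

lemma gv_fix (C : ChaseSeq R Sg s) (hwf : ∀ d ∈ Sg, Dep.wf R d)
    (hni : ∀ A B, s ≠ Dep.ind A B) (n : ℕ) :
    ∀ v ∈ depVals R (C.seq (n+1)), C.gv n v = v := by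
  intro v hv
  rcases stepCases C hwf n with ⟨p, q, hp, hq, hne, hg, hseq⟩ | ⟨hgid, -⟩ | ⟨hgid, -⟩
  · rw [hseq, hg] at hv
    obtain ⟨w, -, hw⟩ := depVals_applyVal (seq_notInd C hwf hni n) hv
    rw [hg]
    exact mergeVal_fix (hw ▸ mergeVal_ne_max hne w)
  · rw [hgid]; rfl
  · rw [hgid]; rfl

lemma fresh_big (C : ChaseSeq R Sg s) (hwf : ∀ d ∈ Sg, Dep.wf R d)
    (hni : ∀ A B, s ≠ Dep.ind A B) (n : ℕ) :
    ∀ v ∈ depVals R (C.seq (n+1)),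
      v ∈ depVals R (C.seq n) ∨ ∀ i ≤ n, ∀ w ∈ depVals R (C.seq i), w < v := by
  intro v hv
  rcases stepCases C hwf n with ⟨p, q, hp, hq, hne, hg, hseq⟩ | ⟨-, hseq⟩ | ⟨-, N, -, hN, hseq⟩
  · left
    rw [hseq, hg] at hv
    obtain ⟨w, hw, hwv⟩ := depVals_applyVal (seq_notInd C hwf hni n) hv
    rw [← hwv]
    unfold mergeVal
    split
    · rcases le_total p q with hpq | hpq
      · rw [min_eq_left hpq]; exact valsOf_pr1_sub _ hp
      · rw [min_eq_right hpq]; exact valsOf_pr1_sub _ hq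
    · exact hw
  · left; rw [hseq] at hv; exact hv
  · rw [hseq] at hv
    have hv' := depVals_withPr1 (C.seq n) (pr1 (C.seq n) ∪ N) hv
    rw [valsOf_union] at hv'
    rcases hv' with (hv1 | hv1) | hv1
    · exact Or.inl (valsOf_pr1_sub _ hv1)
    · obtain ⟨t, ht, a, ha, rfl⟩ := hv1
      rcases hN t ht a ha with h | h
      · exact Or.inl (valsOf_pr1_sub _ h)
      · exact Or.inr h
    · exact Or.inl hv1

lemma gv_le (C : ChaseSeq R Sg s) (hwf : ∀ d ∈ Sg, Dep.wf R d) (n : ℕ) (v : Val) :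
    C.gv n v ≤ v := by
  rcases stepCases C hwf n with ⟨p, q, -, -, -, hg, -⟩ | ⟨hgid, -⟩ | ⟨hgid, -⟩
  · rw [hg]; exact mergeVal_le p q v
  · rw [hgid]; exact le_rfl
  · rw [hgid]; exact le_rfl

lemma Fv_fix (C : ChaseSeq R Sg s) (hwf : ∀ d ∈ Sg, Dep.wf R d)
    (hni : ∀ A B, s ≠ Dep.ind A B) :
    ∀ n, ∀ v ∈ depVals R (C.seq n), ∀ m, m ≤ n → Fv C m n v = v := by
  intro n
  induction n with
  | zero => intro v _ m hm; rw [Nat.le_zero.mp hm, Fv_self]; rfl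
  | succ n ih =>
      intro v hv m hm
      rcases Nat.lt_or_ge m (n+1) with hmn | hmn
      · have hmn' : m ≤ n := Nat.lt_succ_iff.mp hmn
        rw [Fv_succ C hmn', Function.comp_apply]
        have hgv : C.gv n v = v := gv_fix C hwf hni n v hv
        by_cases hvn : v ∈ depVals R (C.seq n)
        · rw [ih v hvn m hmn', hgv]
        · have hbig := (fresh_big C hwf hni n v hv).resolve_left hvn
          have key : ∀ k, m ≤ k → k ≤ n → Fv C m k v = v := by
            intro k hmk
            induction k, hmk using Nat.le_induction with
            | base => intro _; rw [Fv_self]; rfl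
            | succ k hmk ihk =>
                intro hkn
                have hkn' : k ≤ n := Nat.le_of_succ_le hkn
                rw [Fv_succ C hmk, Function.comp_apply, ihk hkn']
                rcases stepCases C hwf k with ⟨p, q, hp, hq, hne, hg, -⟩ |
                  ⟨hgid, -⟩ | ⟨hgid, -⟩
                · rw [hg]
                  refine mergeVal_fix (ne_of_gt ?_)
                  rcases le_total p q with hpq | hpq
                  · rw [max_eq_right hpq]
                    exact hbig k hkn' q (valsOf_pr1_sub _ hq)
                  · rw [max_eq_left hpq]
                    exact hbig k hkn' p (valsOf_pr1_sub _ hp)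
                · rw [hgid]; rfl
                · rw [hgid]; rfl
          rw [key n hmn' le_rfl, hgv]
      · rw [Nat.le_antisymm hm hmn, Fv_self]; rfl

lemma Fv_stab (C : ChaseSeq R Sg s) (hwf : ∀ d ∈ Sg, Dep.wf R d) (m : ℕ) (v : Val) :
    ∃ K, ∀ k, K ≤ k → Fv C m k v = Fv C m K v := by
  have hanti : Antitone (fun k => Fv C m k v) := by
    apply antitone_nat_of_succ_le
    intro n
    by_cases h : m ≤ n
    · rw [Fv_succ C h]; exact gv_le C hwf n _
    · rw [Fv_of_le C (Nat.le_of_lt (Nat.not_le.mp h)),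
        Fv_of_le C (Nat.succ_le_of_lt (Nat.not_le.mp h))]
  obtain ⟨K, hK⟩ : sInf (Set.range fun k => Fv C m k v) ∈ Set.range fun k => Fv C m k v :=
    Nat.sInf_mem (Set.range_nonempty _)
  refine ⟨K, fun k hk => ?_⟩
  have h1 : Fv C m k v ≤ Fv C m K v := hanti hk
  have h2 : sInf (Set.range fun k => Fv C m k v) ≤ Fv C m k v := Nat.sInf_le ⟨k, rfl⟩
  simp only at hK
  have h4 : Fv C m K v ≤ Fv C m k v := by rw [hK]; exact h2
  exact le_antisymm h1 h4

lemma evVal_eq (g : ℕ → Val) (K : ℕ) (h : ∀ k, K ≤ k → g k = g K) : evVal g = g K := by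
  unfold evVal
  have hex : ∃ m, ∀ n, m ≤ n → g n = g m := ⟨K, h⟩
  rw [dif_pos hex]
  have h2 := hex.choose_spec
  calc g hex.choose = g (max hex.choose K) := (h2 _ (le_max_left _ _)).symm
    _ = g K := h _ (le_max_right _ _)

lemma rhoLim_eq_Fv (C : ChaseSeq R Sg s) (hwf : ∀ d ∈ Sg, Dep.wf R d)
    (hni : ∀ A B, s ≠ Dep.ind A B) (n : ℕ) (v : Val)
    (hv : v ∈ depVals R (C.seq n)) :
    ∃ K, n ≤ K ∧ ∀ k, K ≤ k → Fv C n k v = C.rhoLim v := by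
  obtain ⟨K0, hK0⟩ := Fv_stab C hwf n v
  set K := max n K0 with hKdef
  have hrho : ∀ j, K ≤ j → C.rho j v = Fv C n K v := by
    intro j hj
    rw [rho_eq_Fv, Fv_trans C (Nat.zero_le n) j ((le_max_left n K0).trans hj),
      Fv_fix C hwf hni n v hv 0 (Nat.zero_le n),
      hK0 j ((le_max_right n K0).trans hj), hK0 K (le_max_right n K0)]
  refine ⟨K, le_max_left n K0, fun k hk => ?_⟩
  have h1 : Fv C n k v = Fv C n K v := by
    rw [hK0 k ((le_max_right n K0).trans hk), hK0 K (le_max_right n K0)]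
  have h2 : C.rhoLim v = Fv C n K v := by
    unfold ChaseSeq.rhoLim
    rw [evVal_eq _ K (fun j hj => by rw [hrho j hj, hrho K le_rfl])]
    exact hrho K le_rfl
  rw [h1, h2]

lemma limit_lemma (C : ChaseSeq R Sg s) (hwf : ∀ d ∈ Sg, Dep.wf R d)
    (hni : ∀ A B, s ≠ Dep.ind A B) (hR : R.Finite) (A : ℕ → Rel)
    (h1 : ∀ n, ∀ t ∈ A n, restrictT R t = t)
    (h2 : ∀ n, ∀ t ∈ A n, restrictT R (C.gv n ∘ t) ∈ A (n+1))
    (h3 : ∀ n, ∀ t ∈ A n, ∀ a ∈ R, t a ∈ depVals R (C.seq n)) :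
    {t | ∃ m, ∀ k, m ≤ k → t ∈ A k} = ⋃ n, mapRel R C.rhoLim (A n) := by
  ext t
  simp only [Set.mem_setOf_eq, Set.mem_iUnion, mapRel, Set.mem_image]
  constructor
  · rintro ⟨m, hm⟩
    refine ⟨m, t, hm m le_rfl, ?_⟩
    have heq : restrictT R (C.rhoLim ∘ t) = restrictT R t := by
      funext a
      by_cases ha : a ∈ R
      · simp only [restrictT, ha, if_true, Function.comp_apply]
        have hcst : ∀ j, m ≤ j → C.rho j (t a) = C.rho m (t a) := by
          intro j hj
          rw [rho_eq_Fv, rho_eq_Fv,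
            Fv_fix C hwf hni j (t a) (h3 j t (hm j hj) a ha) 0 (Nat.zero_le j),
            Fv_fix C hwf hni m (t a) (h3 m t (hm m le_rfl) a ha) 0 (Nat.zero_le m)]
        have h5 : C.rhoLim (t a) = C.rho m (t a) := evVal_eq _ m hcst
        rw [h5, rho_eq_Fv,
          Fv_fix C hwf hni m (t a) (h3 m t (hm m le_rfl) a ha) 0 (Nat.zero_le m)]
      · simp [restrictT, ha]
    rw [heq]
    exact h1 m t (hm m le_rfl)
  · rintro ⟨n, u, hu, hueq⟩
    have key : ∀ k, n ≤ k → restrictT R (Fv C n k ∘ u) ∈ A k := by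
      intro k hk
      induction k, hk using Nat.le_induction with
      | base =>
          rw [Fv_self, Function.id_comp, h1 n u hu]
          exact hu
      | succ k hk ihk =>
          have hmem := h2 k _ ihk
          rw [restrictT_comp] at hmem
          rw [Fv_succ C hk]
          exact hmem
    have hKa : ∀ a, ∃ K, n ≤ K ∧
        (a ∈ R → ∀ k, K ≤ k → Fv C n k (u a) = C.rhoLim (u a)) := by
      intro a
      by_cases ha : a ∈ R
      · obtain ⟨K, hK1, hK2⟩ := rhoLim_eq_Fv C hwf hni n (u a) (h3 n u hu a ha)
        exact ⟨K, hK1, fun _ => hK2⟩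
      · exact ⟨n, le_rfl, fun h => absurd h ha⟩
    choose Kf hKf1 hKf2 using hKa
    refine ⟨hR.toFinset.sup Kf ⊔ n, fun k hk => ?_⟩
    have hnk : n ≤ k := le_trans le_sup_right hk
    have ht : t = restrictT R (Fv C n k ∘ u) := by
      rw [← hueq]
      funext a
      by_cases ha : a ∈ R
      · simp only [restrictT, ha, if_true, Function.comp_apply]
        have hKak : Kf a ≤ k :=
          le_trans (le_trans (Finset.le_sup (hR.mem_toFinset.mpr ha)) le_sup_left) hk
        exact (hKf2 a ha k hKak).symm
      · simp [restrictT, ha]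
    rw [ht]
    exact key k hnk

lemma inv1 (C : ChaseSeq R Sg s) (hwf : ∀ d ∈ Sg, Dep.wf R d)
    (hni : ∀ A B, s ≠ Dep.ind A B) (hs1 : restrictR R (pr1 s) = pr1 s) :
    ∀ n, ∀ t ∈ pr1 (C.seq n), restrictT R t = t := by
  intro n
  induction n with
  | zero => rw [C.init]; exact fun t ht => mem_restrictT_self hs1 ht
  | succ n ih =>
      rcases stepCases C hwf n with ⟨p, q, -, -, -, -, hseq⟩ | ⟨-, hseq⟩ |
        ⟨-, N, hN, -, hseq⟩
      · rw [hseq, pr1_applyVal]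
        rintro t ⟨u, -, rfl⟩
        exact restrictT_idem _
      · rw [hseq]; exact ih
      · rw [hseq, pr1_withPr1 (seq_notInd C hwf hni n)]
        rintro t (ht | ht)
        · exact ih t ht
        · exact hN t ht

lemma inv2 (C : ChaseSeq R Sg s) (hwf : ∀ d ∈ Sg, Dep.wf R d)
    (hs2 : restrictR R (pr2T s) = pr2T s) :
    ∀ n, ∀ t ∈ pr2T (C.seq n), restrictT R t = t := by
  intro n
  induction n with
  | zero => rw [C.init]; exact fun t ht => mem_restrictT_self hs2 ht
  | succ n ih =>
      rcases stepCases C hwf n with ⟨p, q, -, -, -, -, hseq⟩ | ⟨-, hseq⟩ |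
        ⟨-, N, -, -, hseq⟩
      · rw [hseq, pr2T_applyVal]
        rintro t ⟨u, -, rfl⟩
        exact restrictT_idem _
      · rw [hseq]; exact ih
      · rw [hseq, pr2T_withPr1]; exact ih

lemma pr1_step (C : ChaseSeq R Sg s) (hwf : ∀ d ∈ Sg, Dep.wf R d)
    (hni : ∀ A B, s ≠ Dep.ind A B)
    (hinv : ∀ n, ∀ t ∈ pr1 (C.seq n), restrictT R t = t) (n : ℕ) :
    ∀ t ∈ pr1 (C.seq n), restrictT R (C.gv n ∘ t) ∈ pr1 (C.seq (n+1)) := by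
  intro t ht
  rcases stepCases C hwf n with ⟨p, q, -, -, -, -, hseq⟩ | ⟨hgid, hseq⟩ |
    ⟨hgid, N, -, -, hseq⟩
  · rw [hseq, pr1_applyVal]
    exact ⟨t, ht, rfl⟩
  · rw [hseq, hgid, Function.id_comp, hinv n t ht]
    exact ht
  · rw [hseq, pr1_withPr1 (seq_notInd C hwf hni n), hgid, Function.id_comp, hinv n t ht]
    exact Or.inl ht

lemma pr2_step (C : ChaseSeq R Sg s) (hwf : ∀ d ∈ Sg, Dep.wf R d)
    (hinv : ∀ n, ∀ t ∈ pr2T (C.seq n), restrictT R t = t) (n : ℕ) :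
    ∀ t ∈ pr2T (C.seq n), restrictT R (C.gv n ∘ t) ∈ pr2T (C.seq (n+1)) := by
  intro t ht
  rcases stepCases C hwf n with ⟨p, q, -, -, -, -, hseq⟩ | ⟨hgid, hseq⟩ |
    ⟨hgid, N, -, -, hseq⟩
  · rw [hseq, pr2T_applyVal]
    exact ⟨t, ht, rfl⟩
  · rw [hseq, hgid, Function.id_comp, hinv n t ht]
    exact ht
  · rw [hseq, pr2T_withPr1, hgid, Function.id_comp, hinv n t ht]
    exact ht

lemma pr2_empty (C : ChaseSeq R Sg s) (hwf : ∀ d ∈ Sg, Dep.wf R d)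
    (h : pr2T s = ∅) : ∀ n, pr2T (C.seq n) = ∅ := by
  intro n
  induction n with
  | zero => rw [C.init]; exact h
  | succ n ih =>
      rcases stepCases C hwf n with ⟨p, q, -, -, -, -, hseq⟩ | ⟨-, hseq⟩ |
        ⟨-, N, -, -, hseq⟩
      · rw [hseq, pr2T_applyVal, ih]
        exact Set.image_empty _
      · rw [hseq]; exact ih
      · rw [hseq, pr2T_withPr1]; exact ih

lemma eqFst_seq (C : ChaseSeq R Sg s) (hwf : ∀ d ∈ Sg, Dep.wf R d) :
    ∀ n, eqFst (C.seq n) = C.rho n (eqFst s) := by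
  intro n
  induction n with
  | zero => rw [C.init]; rfl
  | succ n ih =>
      have hrho : C.rho (n+1) = C.gv n ∘ C.rho n := rfl
      rcases stepCases C hwf n with ⟨p, q, -, -, -, hg, hseq⟩ | ⟨hgid, hseq⟩ |
        ⟨hgid, N, -, -, hseq⟩
      · rw [hseq, eqFst_applyVal (by rw [hg]; exact mergeVal_zero p q), hrho,
          Function.comp_apply, ih]
      · rw [hseq, hrho, hgid, Function.id_comp, ih]
      · rw [hseq, eqFst_withPr1, hrho, hgid, Function.id_comp, ih]

lemma eqSnd_seq (C : ChaseSeq R Sg s) (hwf : ∀ d ∈ Sg, Dep.wf R d) :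
    ∀ n, eqSnd (C.seq n) = C.rho n (eqSnd s) := by
  intro n
  induction n with
  | zero => rw [C.init]; rfl
  | succ n ih =>
      have hrho : C.rho (n+1) = C.gv n ∘ C.rho n := rfl
      rcases stepCases C hwf n with ⟨p, q, -, -, -, hg, hseq⟩ | ⟨hgid, hseq⟩ |
        ⟨hgid, N, -, -, hseq⟩
      · rw [hseq, eqSnd_applyVal (by rw [hg]; exact mergeVal_zero p q), hrho,
          Function.comp_apply, ih]
      · rw [hseq, hrho, hgid, Function.id_comp, ih]
      · rw [hseq, eqSnd_withPr1, hrho, hgid, Function.id_comp, ih]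

lemma rho_zero (C : ChaseSeq R Sg s) (hwf : ∀ d ∈ Sg, Dep.wf R d) :
    ∀ n, C.rho n 0 = 0 := by
  intro n
  induction n with
  | zero => rfl
  | succ n ih =>
      have hrho : C.rho (n+1) = C.gv n ∘ C.rho n := rfl
      rw [hrho, Function.comp_apply, ih]
      rcases stepCases C hwf n with ⟨p, q, -, -, -, hg, -⟩ | ⟨hgid, -⟩ | ⟨hgid, -⟩
      · rw [hg]; exact mergeVal_zero p q
      · rw [hgid]; rfl
      · rw [hgid]; rfl

lemma rhoLim_zero (C : ChaseSeq R Sg s) (hwf : ∀ d ∈ Sg, Dep.wf R d) :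
    C.rhoLim 0 = 0 := by
  unfold ChaseSeq.rhoLim
  rw [evVal_eq _ 0 (fun k _ => by rw [rho_zero C hwf, rho_zero C hwf])]
  exact rho_zero C hwf 0

end Aux

/-- (Limit description of the chase result.)
`chase∞(Σ, σ) = ⋃_{n} ρ(σ_n)`, componentwise: `Tⁱ = ⋃_n ρ(pr_i(σ_n))` and the eventual
equality of an egd is the `ρ`-image of the original one. -/
theorem chase_result_limit_description
    (R : Set Val) (hR : R.Finite)
    (Sg : Set Dep) (hwf : ∀ d ∈ Sg, Dep.wf R d)
    (s : Dep) (hs : Dep.wf R s)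
    (C : ChaseSeq R Sg s) :
    pr1 C.result = ⋃ n : ℕ, mapRel R C.rhoLim (pr1 (C.seq n)) ∧
    pr2T C.result = ⋃ n : ℕ, mapRel R C.rhoLim (pr2T (C.seq n)) ∧
    eqFst C.result = C.rhoLim (eqFst s) ∧
    eqSnd C.result = C.rhoLim (eqSnd s) := by
  have hni : ∀ A B, s ≠ Dep.ind A B := by
    intro A B h
    rw [h] at hs
    exact hs
  have hs1 : restrictR R (pr1 s) = pr1 s := by
    cases s with
    | egd R0 T x y => exact hs.2.2.1
    | tgd R0 T T' => exact hs.2.2.2.1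
    | ind A B => exact absurd rfl (hni A B)
  have hs2 : restrictR R (pr2T s) = pr2T s := by
    cases s with
    | egd R0 T x y => exact Set.image_empty _
    | tgd R0 T T' => exact hs.2.2.2.2
    | ind A B => exact absurd rfl (hni A B)
  have hinv1 := inv1 C hwf hni hs1
  have hinv2 := inv2 C hwf hs2
  have hA1 : chaseLim1 C = ⋃ n : ℕ, mapRel R C.rhoLim (pr1 (C.seq n)) :=
    limit_lemma C hwf hni hR (fun n => pr1 (C.seq n)) hinv1
      (pr1_step C hwf hni hinv1)
      (fun n t ht a ha => valsOf_pr1_sub _ ⟨t, ht, a, ha, rfl⟩)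
  have hA2 : chaseLim2 C = ⋃ n : ℕ, mapRel R C.rhoLim (pr2T (C.seq n)) :=
    limit_lemma C hwf hni hR (fun n => pr2T (C.seq n)) hinv2
      (pr2_step C hwf hinv2)
      (fun n t ht a ha => valsOf_pr2_sub _ ⟨t, ht, a, ha, rfl⟩)
  cases s with
  | ind A B => exact absurd rfl (hni A B)
  | egd R0 T x y =>
      refine ⟨hA1, ?_, ?_, ?_⟩
      · have he : ∀ n, pr2T (C.seq n) = (∅ : Rel) := pr2_empty C hwf rfl
        have hU : ⋃ n : ℕ, mapRel R C.rhoLim (pr2T (C.seq n)) = (∅ : Rel) := by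
          simp [he, mapRel]
        show (∅ : Rel) = _
        rw [hU]
      · show evVal (fun n => eqFst (C.seq n)) = C.rhoLim x
        have : (fun n => eqFst (C.seq n)) = fun n => C.rho n x :=
          funext (fun n => eqFst_seq C hwf n)
        rw [this]
        rfl
      · show evVal (fun n => eqSnd (C.seq n)) = C.rhoLim y
        have : (fun n => eqSnd (C.seq n)) = fun n => C.rho n y :=
          funext (fun n => eqSnd_seq C hwf n)
        rw [this]
        rfl
  | tgd R0 T T' =>
      refine ⟨hA1, hA2, ?_, ?_⟩
      · show (0 : Val) = C.rhoLim 0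
        exact (rhoLim_zero C hwf).symm
      · show (0 : Val) = C.rhoLim 0
        exact (rhoLim_zero C hwf).symm

end
end EmbeddedDependencies
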